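/- Conversely, every copyable (information) variable on a symplectic vector space is a Poisson variable: if a linear variable Z : V → Z' admits a symplectic copying transformation as above, then Z Ω Z^T = 0. -/

import Mathlib

open Matrix

/-- The standard symplectic form matrix `[[0, 1], [-1, 0]]` on `(ι ⊕ ι) → K`. -/
def stdJ (K : Type*) [Field K] (ι : Type*) [Fintype ι] [DecidableEq ι] :
    Matrix (ι ⊕ ι) (ι ⊕ ι) K :=
  Matrix.fromBlocks 0 1 (-1) 0

/-! The copier `G` preserves `Ω ⊕ Ω`, hence so does `Gᵀ`; in blocks `G = [[A, B], [C, D]]` this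
gives `A Ω Cᵀ + B Ω Dᵀ = 0`. Copying forces `Z A = Z` and `Z C = Z`; and since the copies may not
depend on where the ancilla lies in the support `a + Uᗮ`, `Z B` and `Z D` vanish on `Uᗮ`, so their
rows lie in the isotropic subspace `U`.
Therefore `Z Ω Zᵀ = Z (A Ω Cᵀ) Zᵀ = -(Z B) Ω (Z D)ᵀ = 0`. -/

theorem stdJ_mul_stdJ (K : Type*) [Field K] (ι : Type*) [Fintype ι] [DecidableEq ι] :
    stdJ K ι * stdJ K ι = -1 := by
  simp [stdJ, fromBlocks_multiply, ← fromBlocks_one, fromBlocks_neg]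

theorem Matrix.mul_mul_transpose_eq_of_transpose_mul_mul_eq {R n : Type*} [CommRing R]
    [Fintype n] [DecidableEq n] {Ω G : Matrix n n R} (hΩ : Ω * Ω = -1)
    (hG : Gᵀ * Ω * G = Ω) : G * Ω * Gᵀ = Ω := by
  have hleft : (-Ω * Gᵀ * Ω) * G = 1 := by
    rw [Matrix.mul_assoc _ Ω, Matrix.mul_assoc, ← Matrix.mul_assoc Gᵀ, hG, neg_mul, hΩ, neg_neg]
  have hright : G * (Ω * Gᵀ * Ω) = -1 := by
    rw [← neg_eq_iff_eq_neg, ← mul_neg, ← neg_mul, ← neg_mul]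
    exact mul_eq_one_comm.mpr hleft
  calc G * Ω * Gᵀ = -(G * (Ω * Gᵀ * Ω) * Ω) := by
        simp only [Matrix.mul_assoc, hΩ, Matrix.mul_neg, Matrix.mul_one, neg_neg]
    _ = Ω := by rw [hright, neg_mul, Matrix.one_mul, neg_neg]

theorem Matrix.toBlocks₁₂_mul_fromBlocks_mul_transpose {R m n : Type*} [CommRing R] [Fintype m]
    [Fintype n] (G : Matrix (m ⊕ n) (m ⊕ n) R) (Ω : Matrix m m R) (Ω' : Matrix n n R) :
    (G * fromBlocks Ω 0 0 Ω' * Gᵀ).toBlocks₁₂ =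
      G.toBlocks₁₁ * Ω * G.toBlocks₂₁ᵀ + G.toBlocks₁₂ * Ω' * G.toBlocks₂₂ᵀ := by
  conv_lhs => rw [← fromBlocks_toBlocks G]
  simp [fromBlocks_transpose, fromBlocks_multiply]

theorem Matrix.mulVec_sumElim_comp_inl {R m n : Type*} [CommRing R] [Fintype m]
    [Fintype n] (G : Matrix (m ⊕ n) (m ⊕ n) R) (v : m → R) (x : n → R) :
    (G *ᵥ Sum.elim v x) ∘ Sum.inl = G.toBlocks₁₁ *ᵥ v + G.toBlocks₁₂ *ᵥ x := by
  conv_lhs => rw [← fromBlocks_toBlocks G]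
  simp [fromBlocks_mulVec]

theorem Matrix.mulVec_sumElim_comp_inr {R m n : Type*} [CommRing R] [Fintype m]
    [Fintype n] (G : Matrix (m ⊕ n) (m ⊕ n) R) (v : m → R) (x : n → R) :
    (G *ᵥ Sum.elim v x) ∘ Sum.inr = G.toBlocks₂₁ *ᵥ v + G.toBlocks₂₂ *ᵥ x := by
  conv_lhs => rw [← fromBlocks_toBlocks G]
  simp [fromBlocks_mulVec]

theorem Submodule.mem_of_forall_dotProduct_eq_zero {K m : Type*} [Field K] [Fintype m]
    {U : Submodule K (m → K)} {r : m → K}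
    (h : ∀ d : m → K, (∀ u ∈ U, u ⬝ᵥ d = 0) → r ⬝ᵥ d = 0) : r ∈ U := by
  classical
  rw [← Subspace.forall_mem_dualAnnihilator_apply_eq_zero_iff]
  intro φ hφ
  have hφ_eq : ∀ x, φ x = x ⬝ᵥ (dotProductEquiv K m).symm φ := fun x => by
    conv_lhs => rw [← (dotProductEquiv K m).apply_symm_apply φ]
    exact dotProduct_comm _ _
  rw [hφ_eq]
  refine h _ fun u hu => ?_
  rw [← hφ_eq]
  exact (Submodule.mem_dualAnnihilator φ).mp hφ u hu

theorem Matrix.mul_mul_transpose_eq_zero_of_rows_mem {K m κ ι : Type*} [Field K] [Fintype m]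
    {Ω : Matrix m m K} {U : Submodule K (m → K)}
    (hU : ∀ x ∈ U, ∀ y ∈ U, x ⬝ᵥ Ω *ᵥ y = 0) {X : Matrix κ m K} {Y : Matrix ι m K}
    (hX : ∀ i, X i ∈ U) (hY : ∀ j, Y j ∈ U) : X * Ω * Yᵀ = 0 := by
  ext i j
  rw [Matrix.mul_apply', Matrix.mul_apply_eq_vecMul, ← dotProduct_mulVec]
  exact hU _ (hX i) _ (hY j)

section Copy

variable {K κ m p : Type*} [Field K] [Fintype m] [Fintype p]
  {Z : Matrix κ m K} {A : Matrix m m K} {B : Matrix m p K} {c : m → K}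
  {U : Submodule K (p → K)} {a : p → K}

theorem mul_mulVec_eq_zero_of_copy
    (h : ∀ v x, (∀ u ∈ U, u ⬝ᵥ x = u ⬝ᵥ a) → Z *ᵥ (A *ᵥ v + B *ᵥ x + c) = Z *ᵥ v)
    {d : p → K} (hd : ∀ u ∈ U, u ⬝ᵥ d = 0) : (Z * B) *ᵥ d = 0 := by
  have hbase : Z *ᵥ (B *ᵥ a + c) = 0 := by simpa using h 0 a fun _ _ => rfl
  have hshift : Z *ᵥ (B *ᵥ (a + d) + c) = 0 := by
    simpa using h 0 (a + d) fun u hu => by rw [dotProduct_add, hd u hu, add_zero]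
  rwa [mulVec_add B, add_right_comm, mulVec_add Z (B *ᵥ a + c), hbase, zero_add,
    mulVec_mulVec] at hshift

theorem mul_eq_self_of_copy
    (h : ∀ v x, (∀ u ∈ U, u ⬝ᵥ x = u ⬝ᵥ a) → Z *ᵥ (A *ᵥ v + B *ᵥ x + c) = Z *ᵥ v) :
    Z * A = Z := by
  refine ext_iff_mulVec.mpr fun v => ?_
  have hbase : Z *ᵥ (B *ᵥ a + c) = 0 := by simpa using h 0 a fun _ _ => rfl
  rw [← mulVec_mulVec, ← h v a fun _ _ => rfl, add_assoc, mulVec_add _ _ (B *ᵥ a + c), hbase,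
    add_zero]

theorem row_mem_of_copy
    (h : ∀ v x, (∀ u ∈ U, u ⬝ᵥ x = u ⬝ᵥ a) → Z *ᵥ (A *ᵥ v + B *ᵥ x + c) = Z *ᵥ v)
    (i : κ) : (Z * B) i ∈ U :=
  Submodule.mem_of_forall_dotProduct_eq_zero fun _ hd =>
    congrFun (mul_mulVec_eq_zero_of_copy h hd) i

end Copy

theorem copyable_variable_is_poisson_general {K : Type*} [Field K] {n : ℕ}
    {κ : Type*}
    (Z : Matrix κ (Fin n ⊕ Fin n) K)
    (G : Matrix ((Fin n ⊕ Fin n) ⊕ (Fin n ⊕ Fin n))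
        ((Fin n ⊕ Fin n) ⊕ (Fin n ⊕ Fin n)) K)
    (w : ((Fin n ⊕ Fin n) ⊕ (Fin n ⊕ Fin n)) → K)
    (hG : Gᵀ * Matrix.fromBlocks (stdJ K (Fin n)) 0 0 (stdJ K (Fin n)) * G =
        Matrix.fromBlocks (stdJ K (Fin n)) 0 0 (stdJ K (Fin n)))
    (U : Submodule K ((Fin n ⊕ Fin n) → K)) (a : (Fin n ⊕ Fin n) → K)
    (hU : ∀ x ∈ U, ∀ y ∈ U, x ⬝ᵥ (stdJ K (Fin n)).mulVec y = 0)
    (hcopy : ∀ (v x : (Fin n ⊕ Fin n) → K), (∀ u ∈ U, u ⬝ᵥ x = u ⬝ᵥ a) →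
        Z.mulVec ((G.mulVec (Sum.elim v x) + w) ∘ Sum.inl) = Z.mulVec v ∧
        Z.mulVec ((G.mulVec (Sum.elim v x) + w) ∘ Sum.inr) = Z.mulVec v) :
    Z * stdJ K (Fin n) * Zᵀ = 0 := by
  set J := stdJ K (Fin n)
  have hJ₂ : fromBlocks J 0 0 J * fromBlocks J 0 0 J = -1 := by
    simp [J, fromBlocks_multiply, stdJ_mul_stdJ, ← fromBlocks_one, fromBlocks_neg]
  have hcross : G.toBlocks₁₁ * J * G.toBlocks₂₁ᵀ + G.toBlocks₁₂ * J * G.toBlocks₂₂ᵀ = 0 := by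
    rw [← toBlocks₁₂_mul_fromBlocks_mul_transpose,
      mul_mul_transpose_eq_of_transpose_mul_mul_eq hJ₂ hG, toBlocks_fromBlocks₁₂]
  have hcopy₁ : ∀ v x, (∀ u ∈ U, u ⬝ᵥ x = u ⬝ᵥ a) →
      Z *ᵥ (G.toBlocks₁₁ *ᵥ v + G.toBlocks₁₂ *ᵥ x + w ∘ Sum.inl) = Z *ᵥ v := fun v x hx => by
    rw [← mulVec_sumElim_comp_inl]; exact (hcopy v x hx).1
  have hcopy₂ : ∀ v x, (∀ u ∈ U, u ⬝ᵥ x = u ⬝ᵥ a) →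
      Z *ᵥ (G.toBlocks₂₁ *ᵥ v + G.toBlocks₂₂ *ᵥ x + w ∘ Sum.inr) = Z *ᵥ v := fun v x hx => by
    rw [← mulVec_sumElim_comp_inr]; exact (hcopy v x hx).2
  calc Z * J * Zᵀ = (Z * G.toBlocks₁₁) * J * (Z * G.toBlocks₂₁)ᵀ := by
        rw [mul_eq_self_of_copy hcopy₁, mul_eq_self_of_copy hcopy₂]
    _ = Z * (G.toBlocks₁₁ * J * G.toBlocks₂₁ᵀ) * Zᵀ := by
        simp only [transpose_mul, Matrix.mul_assoc]
    _ = -((Z * G.toBlocks₁₂) * J * (Z * G.toBlocks₂₂)ᵀ) := by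
        rw [eq_neg_of_add_eq_zero_left hcross]
        simp only [transpose_mul, Matrix.mul_neg, Matrix.neg_mul, Matrix.mul_assoc]
    _ = 0 := by
        rw [mul_mul_transpose_eq_zero_of_rows_mem hU (row_mem_of_copy hcopy₁)
          (row_mem_of_copy hcopy₂), neg_zero]

/-- Every copyable (information) variable is a Poisson variable: if a linear
variable `Z` admits an affine symplectic copying transformation (relative to the
support of an epistemic state `(U, a)`), then `Z Ω Zᵀ = 0`. -/
theorem copyable_variable_is_poisson {K : Type*} [Field K] {n : ℕ}
    {κ : Type*} [Fintype κ] [DecidableEq κ]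
    (Z : Matrix κ (Fin n ⊕ Fin n) K)
    (G : Matrix ((Fin n ⊕ Fin n) ⊕ (Fin n ⊕ Fin n))
        ((Fin n ⊕ Fin n) ⊕ (Fin n ⊕ Fin n)) K)
    (w : ((Fin n ⊕ Fin n) ⊕ (Fin n ⊕ Fin n)) → K)
    (hG : Gᵀ * Matrix.fromBlocks (stdJ K (Fin n)) 0 0 (stdJ K (Fin n)) * G =
        Matrix.fromBlocks (stdJ K (Fin n)) 0 0 (stdJ K (Fin n)))
    (U : Submodule K ((Fin n ⊕ Fin n) → K)) (a : (Fin n ⊕ Fin n) → K)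
    (hU : ∀ x ∈ U, ∀ y ∈ U, x ⬝ᵥ (stdJ K (Fin n)).mulVec y = 0)
    (hcopy : ∀ (v x : (Fin n ⊕ Fin n) → K), (∀ u ∈ U, u ⬝ᵥ x = u ⬝ᵥ a) →
        Z.mulVec ((G.mulVec (Sum.elim v x) + w) ∘ Sum.inl) = Z.mulVec v ∧
        Z.mulVec ((G.mulVec (Sum.elim v x) + w) ∘ Sum.inr) = Z.mulVec v) :
    Z * stdJ K (Fin n) * Zᵀ = 0 :=
  copyable_variable_is_poisson_general Z G w hG U a hU hcopy
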